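/- Assume a² + D² ≠ 0 and T = 0. A polynomial function W(x,y) = Σ_{0 ≤ i+j ≤ 2} α_{ij} x^i y^j of total degree at most two satisfies ∂W/∂x(x,y)·(−y) + ∂W/∂y(x,y)·(Dx − a) = 0 for all (x,y) ∈ ℝ² if and only if W(x,y) = λ + μ·(Dx² + y² − 2ax) for some real constants λ, μ. In other words, the space of quadratic inverse integrating factors is two-dimensional with basis {1, Dx² + y² − 2ax}. -/

import Mathlib

/-! Along `L` the derivative of `W` is again a polynomial of degree at most two, whose six
coefficients are linear in those of `W`. A polynomial of degree at most two vanishes on `ℝ²`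
only if all its coefficients do, so the equation `∇W · L = 0` amounts to the linear system
`α₁₁ = 0`, `a α₀₁ = D α₀₁ = 0`, `α₁₀ = -2 a α₀₂`, `α₂₀ = D α₀₂`; since `a² + D² ≠ 0` it forces
`α₀₁ = 0`, and its solutions are exactly the coefficient vectors of `λ + μ (Dx² + y² − 2ax)`. -/

/-- A generic polynomial of total degree at most two in two variables,
`W(x,y) = Σ_{0 ≤ i+j ≤ 2} α_{ij} x^i y^j`. -/
noncomputable def W (α₀₀ α₁₀ α₀₁ α₂₀ α₁₁ α₀₂ x y : ℝ) : ℝ :=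
  α₀₀ + α₁₀ * x + α₀₁ * y + α₂₀ * x ^ 2 + α₁₁ * x * y + α₀₂ * y ^ 2

theorem deriv_quadratic (c₀ c₁ c₂ t : ℝ) :
    deriv (fun s => c₀ + c₁ * s + c₂ * s ^ 2) t = c₁ + 2 * c₂ * t := by
  have h : HasDerivAt (fun s => c₀ + c₁ * s + c₂ * s ^ 2) (c₁ * 1 + c₂ * (2 * t ^ 1)) t :=
    ((hasDerivAt_id t).const_mul c₁ |>.const_add c₀).add ((hasDerivAt_pow 2 t).const_mul c₂)
  rw [h.deriv]
  ring

section

variable {α₀₀ α₁₀ α₀₁ α₂₀ α₁₁ α₀₂ : ℝ}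

theorem forall_W_eq_zero_iff :
    (∀ x y, W α₀₀ α₁₀ α₀₁ α₂₀ α₁₁ α₀₂ x y = 0) ↔
      α₀₀ = 0 ∧ α₁₀ = 0 ∧ α₀₁ = 0 ∧ α₂₀ = 0 ∧ α₁₁ = 0 ∧ α₀₂ = 0 := by
  constructor
  · intro h
    have h00 := h 0 0
    have h10 := h 1 0
    have hm10 := h (-1) 0
    have h01 := h 0 1
    have h0m1 := h 0 (-1)
    have h11 := h 1 1
    simp only [W] at h00 h10 hm10 h01 h0m1 h11
    refine ⟨?_, ?_, ?_, ?_, ?_, ?_⟩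
    · linear_combination h00
    · linear_combination (h10 - hm10) / 2
    · linear_combination (h01 - h0m1) / 2
    · linear_combination (h10 + hm10) / 2 - h00
    · linear_combination h11 - h10 - h01 + h00
    · linear_combination (h01 + h0m1) / 2 - h00
  · rintro ⟨rfl, rfl, rfl, rfl, rfl, rfl⟩ x y
    simp [W]

theorem deriv_W_fst (x y : ℝ) :
    deriv (fun x' => W α₀₀ α₁₀ α₀₁ α₂₀ α₁₁ α₀₂ x' y) x = α₁₀ + 2 * α₂₀ * x + α₁₁ * y := by
  have hW : (fun x' => W α₀₀ α₁₀ α₀₁ α₂₀ α₁₁ α₀₂ x' y)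
      = fun x' => (α₀₀ + α₀₁ * y + α₀₂ * y ^ 2) + (α₁₀ + α₁₁ * y) * x' + α₂₀ * x' ^ 2 := by
    ext x'
    unfold W
    ring
  rw [hW, deriv_quadratic]
  ring

theorem deriv_W_snd (x y : ℝ) :
    deriv (fun y' => W α₀₀ α₁₀ α₀₁ α₂₀ α₁₁ α₀₂ x y') y = α₀₁ + α₁₁ * x + 2 * α₀₂ * y := by
  have hW : (fun y' => W α₀₀ α₁₀ α₀₁ α₂₀ α₁₁ α₀₂ x y')
      = fun y' => (α₀₀ + α₁₀ * x + α₂₀ * x ^ 2) + (α₀₁ + α₁₁ * x) * y' + α₀₂ * y' ^ 2 := by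
    ext y'
    unfold W
    ring
  rw [hW, deriv_quadratic]

theorem lieDeriv_W (a D x y : ℝ) :
    deriv (fun x' => W α₀₀ α₁₀ α₀₁ α₂₀ α₁₁ α₀₂ x' y) x * (-y)
        + deriv (fun y' => W α₀₀ α₁₀ α₀₁ α₂₀ α₁₁ α₀₂ x y') y * (D * x - a)
      = W (-(a * α₀₁)) (D * α₀₁ - a * α₁₁) (-(α₁₀ + 2 * a * α₀₂)) (D * α₁₁)
          (2 * (D * α₀₂ - α₂₀)) (-α₁₁) x y := by
  rw [deriv_W_fst, deriv_W_snd]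
  unfold W
  ring

theorem W_sub_first_integral (a D lam mu x y : ℝ) :
    W α₀₀ α₁₀ α₀₁ α₂₀ α₁₁ α₀₂ x y - (lam + mu * (D * x ^ 2 + y ^ 2 - 2 * a * x))
      = W (α₀₀ - lam) (α₁₀ + 2 * a * mu) α₀₁ (α₂₀ - D * mu) α₁₁ (α₀₂ - mu) x y := by
  unfold W
  ring

end

/-- For `a² + D² ≠ 0` and trace `T = 0`, a polynomial of degree at most two satisfies
`∇W · L = 0` (with `L(x,y) = (−y, Dx − a)`) if and only if it is a linear combination
`λ + μ·(Dx² + y² − 2ax)`: the space of quadratic inverse integrating factors is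
two-dimensional with basis `{1, Dx² + y² − 2ax}`. -/
theorem stmt_2 (a D : ℝ) (haD : a ^ 2 + D ^ 2 ≠ 0)
    (α₀₀ α₁₀ α₀₁ α₂₀ α₁₁ α₀₂ : ℝ) :
    (∀ x y : ℝ,
        deriv (fun x' => W α₀₀ α₁₀ α₀₁ α₂₀ α₁₁ α₀₂ x' y) x * (-y)
          + deriv (fun y' => W α₀₀ α₁₀ α₀₁ α₂₀ α₁₁ α₀₂ x y') y * (D * x - a)
          = 0)
      ↔ ∃ lam mu : ℝ, ∀ x y : ℝ,
          W α₀₀ α₁₀ α₀₁ α₂₀ α₁₁ α₀₂ x y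
            = lam + mu * (D * x ^ 2 + y ^ 2 - 2 * a * x) := by
  simp_rw [lieDeriv_W, forall_W_eq_zero_iff, ← sub_eq_zero (a := W _ _ _ _ _ _ _ _),
    W_sub_first_integral, forall_W_eq_zero_iff]
  constructor
  · rintro ⟨ha, hD, h₁₀, -, h₂₀, h₁₁⟩
    have h₀₁ : α₀₁ * (a ^ 2 + D ^ 2) = 0 := by
      linear_combination -(a * ha) + D * hD - a * D * h₁₁
    refine ⟨α₀₀, α₀₂, sub_self _, by linear_combination -h₁₀,
      (mul_eq_zero.1 h₀₁).resolve_right haD, by linear_combination -h₂₀ / 2,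
      by linear_combination -h₁₁, sub_self _⟩
  · rintro ⟨lam, mu, -, h₁₀, rfl, h₂₀, rfl, h₀₂⟩
    refine ⟨by ring, by ring, ?_, by ring, ?_, by ring⟩
    · linear_combination -h₁₀ - 2 * a * h₀₂
    · linear_combination 2 * D * h₀₂ - 2 * h₂₀
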